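/- Let V be a complex vector space, ν ∈ ℂ with ν ≠ 1 and ν ≠ −1, and U : V³ → ℂ a trilinear map satisfying ξ_ν U = U, where ξ_ν ∈ ℂ[S₃] acts on U as a symmetry operator. Then for all x,y,z ∈ V the following four identities hold: (ν²−1)·U(z,y,x) = (ν²−ν+1)·U(x,y,z) − (2ν−1)·U(x,z,y); (ν²−1)·U(z,x,y) = −(ν²−2ν)·U(x,y,z) − (ν²−ν+1)·U(x,z,y); (ν²−1)·U(y,z,x) = −(2ν−1)·U(x,y,z) + (ν²−ν+1)·U(x,z,y); and (ν²−1)·U(y,x,z) = −(ν²−ν+1)·U(x,y,z) − (ν²−2ν)·U(x,z,y). -/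

import Mathlib

/-- The action of a group-algebra element `a ∈ 𝕂[S_r]` on an `r`-linear map:
`(aT)(v₁,…,v_r) = Σ_p a(p)·T(v_{p(1)},…,v_{p(r)})`. -/
noncomputable def gaAct {𝕂 : Type*} [RCLike 𝕂] {V : Type*} [AddCommGroup V] [Module 𝕂 V]
    {r : ℕ} (a : MonoidAlgebra 𝕂 (Equiv.Perm (Fin r)))
    (T : MultilinearMap 𝕂 (fun _ : Fin r => V) 𝕂) :
    MultilinearMap 𝕂 (fun _ : Fin r => V) 𝕂 :=
  ∑ p : Equiv.Perm (Fin r), a.coeff p • T.domDomCongr p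

/-- The idempotent `ξ_ν = (1/3)(id + ν(2 3) + (1−ν)(1 2) − ν·c + (ν−1)·c² − (1 3))` of
`ℂ[S₃]`, where `c` is the 3-cycle `1↦2↦3↦1` (0-based: `finRotate 3`). -/
noncomputable def xi (ν : ℂ) : MonoidAlgebra ℂ (Equiv.Perm (Fin 3)) :=
  (3⁻¹ : ℂ) • (MonoidAlgebra.single 1 1
    + ν • MonoidAlgebra.single (Equiv.swap (1 : Fin 3) 2) 1
    + (1 - ν) • MonoidAlgebra.single (Equiv.swap (0 : Fin 3) 1) 1
    - ν • MonoidAlgebra.single (finRotate 3) 1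
    + (ν - 1) • MonoidAlgebra.single (finRotate 3 * finRotate 3) 1
    - MonoidAlgebra.single (Equiv.swap (0 : Fin 3) 2) 1)


/-!
Since `gaAct` is linear in the group-algebra element and sends a basis permutation `q` to
`T.domDomCongr q`, the hypothesis `ξ_ν U = U` evaluated at `(a, b, c)` is one linear relation
among the six values of `U` at the permutations of `(a, b, c)`. Instantiated at four
orderings of `(x, y, z)` these relations, combined with coefficients polynomial in `ν`,
express `(ν² - 1)` times each value through `U(x, y, z)` and `U(x, z, y)`.
-/

section GroupAlgebraAction

variable {𝕂 : Type*} [RCLike 𝕂] {V : Type*} [AddCommGroup V] [Module 𝕂 V] {r : ℕ}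
  (T : MultilinearMap 𝕂 (fun _ : Fin r => V) 𝕂)

theorem gaAct_add (a b : MonoidAlgebra 𝕂 (Equiv.Perm (Fin r))) :
    gaAct (a + b) T = gaAct a T + gaAct b T := by
  simp only [gaAct, MonoidAlgebra.coeff_add, Finsupp.add_apply, add_smul, Finset.sum_add_distrib]

theorem gaAct_sub (a b : MonoidAlgebra 𝕂 (Equiv.Perm (Fin r))) :
    gaAct (a - b) T = gaAct a T - gaAct b T := by
  rw [gaAct, gaAct, gaAct, ← Finset.sum_sub_distrib]
  refine Finset.sum_congr rfl fun p _ => ?_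
  ext v
  simp only [MonoidAlgebra.coeff_sub, Finsupp.sub_apply, smul_apply, sub_apply, smul_eq_mul,
    sub_mul]

theorem gaAct_smul (c : 𝕂) (a : MonoidAlgebra 𝕂 (Equiv.Perm (Fin r))) :
    gaAct (c • a) T = c • gaAct a T := by
  simp only [gaAct, MonoidAlgebra.coeff_smul, Finsupp.smul_apply, smul_eq_mul, mul_smul,
    Finset.smul_sum]

theorem gaAct_single_one (q : Equiv.Perm (Fin r)) :
    gaAct (MonoidAlgebra.single q 1) T = T.domDomCongr q := by
  rw [gaAct, Finset.sum_eq_single q (fun p _ hp => by simp [MonoidAlgebra.coeff_single, hp])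
    (by simp)]
  simp [MonoidAlgebra.coeff_single]

end GroupAlgebraAction

theorem xi_fixed_relation {V : Type*} [AddCommGroup V] [Module ℂ V] {ν : ℂ}
    {U : MultilinearMap ℂ (fun _ : Fin 3 => V) ℂ} (hU : gaAct (xi ν) U = U) (a b c : V) :
    ν * U ![a, c, b] + (1 - ν) * U ![b, a, c] - ν * U ![b, c, a] + (ν - 1) * U ![c, a, b]
      - U ![c, b, a] = 2 * U ![a, b, c] := by
  have h := DFunLike.congr_fun hU ![a, b, c]
  simp only [xi, gaAct_add, gaAct_sub, gaAct_smul, gaAct_single_one, add_apply, sub_apply,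
    smul_apply, MultilinearMap.domDomCongr_apply, smul_eq_mul] at h
  obtain ⟨h₁, h₁₂, h₀₁, hc, hc₂, h₀₂⟩ :
      (fun i => ![a, b, c] ((1 : Equiv.Perm (Fin 3)) i)) = ![a, b, c] ∧
      (fun i => ![a, b, c] (Equiv.swap (1 : Fin 3) 2 i)) = ![a, c, b] ∧
      (fun i => ![a, b, c] (Equiv.swap (0 : Fin 3) 1 i)) = ![b, a, c] ∧
      (fun i => ![a, b, c] (finRotate 3 i)) = ![b, c, a] ∧
      (fun i => ![a, b, c] ((finRotate 3 * finRotate 3) i)) = ![c, a, b] ∧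
      (fun i => ![a, b, c] (Equiv.swap (0 : Fin 3) 2 i)) = ![c, b, a] := by
    refine ⟨?_, ?_, ?_, ?_, ?_, ?_⟩ <;> ext i <;> fin_cases i <;> rfl
  rw [h₁, h₁₂, h₀₁, hc, hc₂, h₀₂] at h
  linear_combination 3 * h

theorem stmt18_general {V : Type*} [AddCommGroup V] [Module ℂ V]
    (ν : ℂ)
    (U : MultilinearMap ℂ (fun _ : Fin 3 => V) ℂ)
    (hU : gaAct (xi ν) U = U) :
    ∀ x y z : V,
      (ν ^ 2 - 1) * U ![z, y, x] =
        (ν ^ 2 - ν + 1) * U ![x, y, z] - (2 * ν - 1) * U ![x, z, y] ∧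
      (ν ^ 2 - 1) * U ![z, x, y] =
        -(ν ^ 2 - 2 * ν) * U ![x, y, z] - (ν ^ 2 - ν + 1) * U ![x, z, y] ∧
      (ν ^ 2 - 1) * U ![y, z, x] =
        -(2 * ν - 1) * U ![x, y, z] + (ν ^ 2 - ν + 1) * U ![x, z, y] ∧
      (ν ^ 2 - 1) * U ![y, x, z] =
        -(ν ^ 2 - ν + 1) * U ![x, y, z] - (ν ^ 2 - 2 * ν) * U ![x, z, y] := by
  intro x y z
  have hxyz := xi_fixed_relation hU x y z
  have hxzy := xi_fixed_relation hU x z y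
  have hyxz := xi_fixed_relation hU y x z
  have hyzx := xi_fixed_relation hU y z x
  refine ⟨?_, ?_, ?_, ?_⟩
  · linear_combination ((2 - ν) / 3) * hxyz + ((2 - 2 * ν - ν ^ 2) / 3) * hxzy
      + ((ν ^ 2 - 1) / 3) * hyzx
  · linear_combination ((2 * ν - ν ^ 2) / 3) * hxyz + ((ν - 2) / 3) * hxzy
      + ((1 - ν ^ 2) / 3) * hyxz + ((1 - ν ^ 2) / 3) * hyzx
  · linear_combination ((1 - 2 * ν) / 3) * hxyz + ((1 - ν + ν ^ 2) / 3) * hxzy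
      + ((1 - ν ^ 2) / 3) * hyzx
  · linear_combination (-(1 - ν + ν ^ 2) / 3) * hxyz + ((2 * ν - ν ^ 2) / 3) * hxzy
      + ((1 - ν ^ 2) / 3) * hyxz

/-- A trilinear map `U` with `ξ_ν U = U`, `ν ≠ ±1`, satisfies the four linear
identities (5.13). -/
theorem stmt18 {V : Type*} [AddCommGroup V] [Module ℂ V]
    (ν : ℂ) (hν1 : ν ≠ 1) (hν2 : ν ≠ -1)
    (U : MultilinearMap ℂ (fun _ : Fin 3 => V) ℂ)
    (hU : gaAct (xi ν) U = U) :
    ∀ x y z : V,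
      (ν ^ 2 - 1) * U ![z, y, x] =
        (ν ^ 2 - ν + 1) * U ![x, y, z] - (2 * ν - 1) * U ![x, z, y] ∧
      (ν ^ 2 - 1) * U ![z, x, y] =
        -(ν ^ 2 - 2 * ν) * U ![x, y, z] - (ν ^ 2 - ν + 1) * U ![x, z, y] ∧
      (ν ^ 2 - 1) * U ![y, z, x] =
        -(2 * ν - 1) * U ![x, y, z] + (ν ^ 2 - ν + 1) * U ![x, z, y] ∧
      (ν ^ 2 - 1) * U ![y, x, z] =
        -(ν ^ 2 - ν + 1) * U ![x, y, z] - (ν ^ 2 - 2 * ν) * U ![x, z, y] :=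
  stmt18_general ν U hU
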